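/- For a symmetric endomorphism A of an n-dimensional inner product space, tr(P_{r-1} A^2) = σ_1 σ_r − (r+1) σ_{r+1}, where σ_p is the p-th elementary symmetric polynomial of the eigenvalues of A (with σ_p = 0 for p > n). -/

import Mathlib

open Matrix Finset

/-- The `p`-th elementary symmetric polynomial of `k 1, ..., k n`. -/
noncomputable def esymmF (n : ℕ) (k : Fin n → ℝ) (p : ℕ) : ℝ :=
  ∑ s ∈ (Finset.univ : Finset (Fin n)).powersetCard p, ∏ i ∈ s, k i

/-- The `r`-th Newton transformation `P_r = Σ_{j=0}^r (-1)^j σ_{r-j} A^j`. -/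
noncomputable def newtonT (n : ℕ) (A : Matrix (Fin n) (Fin n) ℝ) (k : Fin n → ℝ) (r : ℕ) :
    Matrix (Fin n) (Fin n) ℝ :=
  ∑ j ∈ Finset.range (r + 1), ((-1 : ℝ) ^ j * esymmF n k (r - j)) • A ^ j

/-!
Since `P_{r-1} A²` is a polynomial in `A`, its trace is `Σ_j (-1)^j σ_{r-1-j} p_{j+2}`, where
`p_q = tr A^q` is the `q`-th power sum of the eigenvalues. Newton's identity
`(r+1) σ_{r+1} = Σ_{i=1}^{r+1} (-1)^{i-1} σ_{r+1-i} p_i`, with the term `σ_r p_1 = σ_r σ_1` split off,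
is exactly this sum up to sign.
-/

namespace MvPolynomial

variable (σ R : Type*) [Fintype σ] [CommRing R]

theorem succ_mul_esymm_eq_sum_antidiagonal (m : ℕ) :
    (m + 1) * esymm σ R (m + 1) =
      ∑ a ∈ antidiagonal m, (-1) ^ a.2 * esymm σ R a.1 * psum σ R (a.2 + 1) := by
  have newton := mul_esymm_eq_sum σ R (m + 1)
  rw [sum_filter, Nat.sum_antidiagonal_succ', if_neg (lt_irrefl _), zero_add, mul_sum] at newton
  push_cast at newton
  rw [newton]
  refine sum_congr rfl fun ⟨i, j⟩ hij => ?_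
  obtain rfl : i + j = m := HasAntidiagonal.mem_antidiagonal.mp hij
  have sign : (-1 : MvPolynomial σ R) ^ (i + j + 1 + 1) * (-1) ^ i = (-1) ^ j := by
    rw [← pow_add, show i + j + 1 + 1 + i = j + 2 * (i + 1) by ring, pow_add, pow_mul]
    simp
  rw [if_pos (by omega), ← sign]
  ring

theorem sum_range_esymm_mul_psum_add_two (m : ℕ) :
    ∑ j ∈ range (m + 1), (-1) ^ j * esymm σ R (m - j) * psum σ R (j + 2) =
      esymm σ R 1 * esymm σ R (m + 1) - (m + 2) * esymm σ R (m + 2) := by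
  have newton := succ_mul_esymm_eq_sum_antidiagonal σ R (m + 1)
  rw [Nat.sum_antidiagonal_succ', ← Nat.sum_antidiagonal_swap,
    Nat.sum_antidiagonal_eq_sum_range_succ_mk] at newton
  simp only [Prod.swap, pow_zero, one_mul, zero_add, psum_one, ← esymm_one, pow_succ, mul_neg_one,
    neg_mul, sum_neg_distrib, add_assoc, Nat.reduceAdd, Nat.succ_eq_add_one] at newton
  push_cast at newton
  linear_combination newton

end MvPolynomial

theorem Matrix.IsHermitian.trace_pow {𝕜 ι : Type*} [RCLike 𝕜] [Fintype ι] [DecidableEq ι]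
    {A : Matrix ι ι 𝕜} (hA : A.IsHermitian) (m : ℕ) :
    (A ^ m).trace = ∑ i, (hA.eigenvalues i : 𝕜) ^ m := by
  conv_lhs => rw [hA.spectral_theorem, ← map_pow, Unitary.conjStarAlgAut_apply, trace_mul_cycle,
    Unitary.coe_star_mul_self, one_mul, diagonal_pow, trace_diagonal]
  simp

theorem trace_newtonT_mul_pow (n : ℕ) (A : Matrix (Fin n) (Fin n) ℝ) (k : Fin n → ℝ) (r q : ℕ) :
    (newtonT n A k r * A ^ q).trace =
      ∑ j ∈ range (r + 1), (-1) ^ j * esymmF n k (r - j) * (A ^ (j + q)).trace := by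
  simp only [newtonT, sum_mul, smul_mul, ← pow_add, trace_sum, trace_smul, smul_eq_mul]

theorem aeval_esymm_eq_esymmF (n : ℕ) (k : Fin n → ℝ) (p : ℕ) :
    MvPolynomial.aeval k (MvPolynomial.esymm (Fin n) ℝ p) = esymmF n k p := by
  simp [MvPolynomial.esymm, esymmF]

theorem trace_newton_mul_sq_general (n r : ℕ) (hr1 : 1 ≤ r)
    (A : Matrix (Fin n) (Fin n) ℝ) (hA : A.IsHermitian) :
    (newtonT n A hA.eigenvalues (r - 1) * A ^ 2).trace =
      esymmF n hA.eigenvalues 1 * esymmF n hA.eigenvalues r -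
        ((r : ℝ) + 1) * esymmF n hA.eigenvalues (r + 1) := by
  obtain ⟨m, rfl⟩ := Nat.exists_eq_add_of_le' hr1
  have newton := congrArg (MvPolynomial.aeval hA.eigenvalues)
    (MvPolynomial.sum_range_esymm_mul_psum_add_two (Fin n) ℝ m)
  simp only [map_sum, map_mul, map_sub, map_pow, map_neg, map_one, map_add, map_natCast, map_ofNat,
    aeval_esymm_eq_esymmF, MvPolynomial.psum, MvPolynomial.aeval_X] at newton
  rw [Nat.add_sub_cancel, trace_newtonT_mul_pow]
  simp only [hA.trace_pow, RCLike.ofReal_real_eq_id, id]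
  push_cast
  linear_combination newton

/-- tr(P_{r-1} A²) = σ_1 σ_r − (r+1) σ_{r+1}. -/
theorem trace_newton_mul_sq (n r : ℕ) (hr1 : 1 ≤ r) (hrn : r ≤ n)
    (A : Matrix (Fin n) (Fin n) ℝ) (hA : A.IsHermitian) :
    (newtonT n A hA.eigenvalues (r - 1) * A ^ 2).trace =
      esymmF n hA.eigenvalues 1 * esymmF n hA.eigenvalues r -
        ((r : ℝ) + 1) * esymmF n hA.eigenvalues (r + 1) :=
  trace_newton_mul_sq_general n r hr1 A hA
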